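/- arXiv:1905.05878 — 4 statements merged into one kernel-verified Lean document; each statement's English description precedes it below -/
import Mathlib

section
/- Every compact subgroup G of GL(n,ℝ) is conjugate to a subgroup of the orthogonal group O(n): there exists g ∈ GL(n,ℝ) such that g⁻¹Gg ⊆ O(n). -/
/-!
Weyl's unitarian trick: averaging `ρ k * (ρ k)ᵀ` over the Haar measure of the compact group gives
a positive definite matrix `B` with `ρ k * B * (ρ k)ᵀ = B` for every `k`, i.e. an inner product
preserved by the group. Writing `B = S * S` with `S = √B`, every `S⁻¹ * ρ k * S` is orthogonal.
-/

open MeasureTheory Matrix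

namespace Matrix

variable {ι : Type*} [Fintype ι] [DecidableEq ι]

theorem inv_mul_mul_mem_unitaryGroup_of_mul_mul_star_eq {R : Type*} [CommRing R] [StarRing R]
    (S : GL ι R) (hS : IsSelfAdjoint (S : Matrix ι ι R)) {A : Matrix ι ι R}
    (hA : A * (S * S) * star A = S * S) :
    (↑S⁻¹ : Matrix ι ι R) * A * S ∈ unitaryGroup ι R := by
  have hSinv : star (↑S⁻¹ : Matrix ι ι R) = ↑S⁻¹ := by
    rw [coe_units_inv, star_eq_conjTranspose, conjTranspose_nonsing_inv,
      ← star_eq_conjTranspose, hS.star_eq]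
  rw [mem_unitaryGroup_iff, star_mul, star_mul, hS.star_eq, hSinv]
  calc _ = ↑S⁻¹ * (A * (S * S) * star A) * ↑S⁻¹ := by simp only [mul_assoc]
    _ = 1 := by rw [hA, ← mul_assoc, Units.inv_mul, one_mul, Units.mul_inv]

open scoped MatrixOrder ComplexOrder in
theorem PosDef.exists_conj_mem_unitaryGroup {𝕜 : Type*} [RCLike 𝕜] {B : Matrix ι ι 𝕜}
    (hB : B.PosDef) : ∃ g : GL ι 𝕜, ∀ A : Matrix ι ι 𝕜, A * B * star A = B →
      (↑g⁻¹ : Matrix ι ι 𝕜) * A * g ∈ unitaryGroup ι 𝕜 := by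
  have hB0 : 0 ≤ B := hB.posSemidef.nonneg
  have hunit : IsUnit (CFC.sqrt B) := (CFC.isUnit_sqrt_iff B).mpr hB.isUnit
  refine ⟨hunit.unit, fun A hA => inv_mul_mul_mem_unitaryGroup_of_mul_mul_star_eq _ ?_ ?_⟩
  · exact (CFC.sqrt_nonneg B).isSelfAdjoint
  · simpa only [IsUnit.unit_spec, CFC.sqrt_mul_sqrt_self B] using hA

end Matrix

section Averaging

attribute [local instance] Matrix.linftyOpNormedRing Matrix.linftyOpNormedAlgebra

/- Instance search only finds a `ContinuousENorm` for the norm topology, which is not reducibly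
the product topology `Matrix.topologicalSpace` that `Integrable` picks up. -/
noncomputable abbrev Matrix.linftyOpContinuousENorm {ι : Type*} [Fintype ι] [DecidableEq ι] :
    ContinuousENorm (Matrix ι ι ℝ) :=
  SeminormedAddGroup.toContinuousENorm

attribute [local instance] Matrix.linftyOpContinuousENorm

variable {ι : Type*} [Fintype ι] [DecidableEq ι]

section Integral

variable {X : Type*} [MeasurableSpace X] {μ : Measure X} {F : X → Matrix ι ι ℝ}

theorem Matrix.integral_dotProduct_mulVec (hF : Integrable F μ) (v w : ι → ℝ) :
    ∫ x, v ⬝ᵥ F x *ᵥ w ∂μ = v ⬝ᵥ (∫ x, F x ∂μ) *ᵥ w := by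
  let φ : Matrix ι ι ℝ →ₗ[ℝ] ℝ :=
    { toFun := fun M => v ⬝ᵥ M *ᵥ w
      map_add' := fun M N => by simp only [add_mulVec, dotProduct_add]
      map_smul' := fun c M => by simp only [smul_mulVec, dotProduct_smul, RingHom.id_apply] }
  exact φ.toContinuousLinearMap.integral_comp_comm hF

theorem Matrix.integral_transpose (hF : Integrable F μ) :
    ∫ x, (F x)ᵀ ∂μ = (∫ x, F x ∂μ)ᵀ :=
  (transposeLinearEquiv ι ι ℝ ℝ).toLinearMap.toContinuousLinearMap.integral_comp_comm hF

end Integral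

namespace MonoidHom

variable {K : Type*} [Group K] [TopologicalSpace K] {ρ : K →* GL ι ℝ}

theorem continuous_mul_star (hρ : Continuous ρ) :
    Continuous fun k => (ρ k : Matrix ι ι ℝ) * star (ρ k : Matrix ι ι ℝ) := by
  have hval : Continuous fun k => (ρ k : Matrix ι ι ℝ) := Units.continuous_val.comp hρ
  exact hval.mul (continuous_star.comp hval)

variable [MeasurableSpace K]

noncomputable def gramAverage (ρ : K →* GL ι ℝ) (μ : Measure K) : Matrix ι ι ℝ :=
  ∫ k, (ρ k : Matrix ι ι ℝ) * star (ρ k : Matrix ι ι ℝ) ∂μ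

variable (μ : Measure K) [OpensMeasurableSpace K] [CompactSpace K] [IsFiniteMeasure μ]

theorem integrable_mul_star (hρ : Continuous ρ) :
    Integrable (fun k => (ρ k : Matrix ι ι ℝ) * star (ρ k : Matrix ι ι ℝ)) μ :=
  (continuous_mul_star hρ).integrable_of_hasCompactSupport (HasCompactSupport.of_compactSpace _)

theorem mul_gramAverage_mul_star [MeasurableMul K] [μ.IsMulLeftInvariant] (hρ : Continuous ρ)
    (g : K) :
    (ρ g : Matrix ι ι ℝ) * ρ.gramAverage μ * star (ρ g : Matrix ι ι ℝ) =
      ρ.gramAverage μ := by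
  have hint := integrable_mul_star μ hρ
  calc (ρ g : Matrix ι ι ℝ) * ρ.gramAverage μ * star (ρ g : Matrix ι ι ℝ)
      = ∫ k, (ρ g : Matrix ι ι ℝ) * (ρ k * star (ρ k : Matrix ι ι ℝ)) *
          star (ρ g : Matrix ι ι ℝ) ∂μ := by
        rw [integral_mul_const_of_integrable (hint.const_mul _),
          integral_const_mul_of_integrable hint, gramAverage]
    _ = ∫ k, (ρ (g * k) : Matrix ι ι ℝ) * star (ρ (g * k) : Matrix ι ι ℝ) ∂μ := by
        simp only [map_mul, Units.val_mul, star_mul, mul_assoc]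
    _ = ρ.gramAverage μ :=
        integral_mul_left_eq_self (fun k => (ρ k : Matrix ι ι ℝ) * star (ρ k : Matrix ι ι ℝ))
          g

theorem gramAverage_posDef [μ.IsOpenPosMeasure] (hρ : Continuous ρ) :
    (ρ.gramAverage μ).PosDef := by
  have hint := integrable_mul_star μ hρ
  refine .of_dotProduct_mulVec_pos ?hermitian fun v hv => ?_
  case hermitian =>
    rw [IsHermitian, conjTranspose_eq_transpose_of_trivial, gramAverage,
      ← integral_transpose hint]
    simp only [transpose_mul, star_eq_conjTranspose, conjTranspose_eq_transpose_of_trivial,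
      transpose_transpose]
  have hq : Continuous fun k =>
      star v ⬝ᵥ ((ρ k : Matrix ι ι ℝ) * star (ρ k : Matrix ι ι ℝ)) *ᵥ v :=
    continuous_const.dotProduct ((continuous_mul_star hρ).matrix_mulVec continuous_const)
  rw [gramAverage, ← integral_dotProduct_mulVec hint]
  refine integral_pos_of_integrable_nonneg_nonzero (x := 1) hq
    (hq.integrable_of_hasCompactSupport (HasCompactSupport.of_compactSpace _))
    (fun k => (posSemidef_self_mul_conjTranspose _).dotProduct_mulVec_nonneg v) ?_
  simpa using (dotProduct_star_self_pos_iff.mpr hv).ne'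

end MonoidHom

end Averaging

theorem MonoidHom.exists_conj_mem_orthogonalGroup {ι K : Type*} [Fintype ι] [DecidableEq ι]
    [Group K] [TopologicalSpace K] [IsTopologicalGroup K] [CompactSpace K] (ρ : K →* GL ι ℝ)
    (hρ : Continuous ρ) :
    ∃ g : GL ι ℝ, ∀ k,
      ((g⁻¹ * ρ k * g : GL ι ℝ) : Matrix ι ι ℝ) ∈ orthogonalGroup ι ℝ := by
  borelize K
  obtain ⟨g, hg⟩ := (ρ.gramAverage_posDef Measure.haar hρ).exists_conj_mem_unitaryGroup
  exact ⟨g, fun k => by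
    simpa only [Units.val_mul] using hg _ (ρ.mul_gramAverage_mul_star Measure.haar hρ k)⟩

/-- Every compact subgroup G of GL(n,ℝ) is conjugate to a subgroup of the orthogonal
group O(n): there is g ∈ GL(n,ℝ) with g⁻¹ G g ⊆ O(n). -/
theorem compact_subgroup_conjugate_to_orthogonal
    {n : ℕ} (G : Subgroup (Matrix.GeneralLinearGroup (Fin n) ℝ))
    (hG : IsCompact (G : Set (Matrix.GeneralLinearGroup (Fin n) ℝ))) :
    ∃ g : Matrix.GeneralLinearGroup (Fin n) ℝ, ∀ A ∈ G,
      ((g⁻¹ * A * g : Matrix.GeneralLinearGroup (Fin n) ℝ) : Matrix (Fin n) (Fin n) ℝ) ∈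
        Matrix.orthogonalGroup (Fin n) ℝ := by
  have : CompactSpace G := isCompact_iff_compactSpace.mp hG
  obtain ⟨g, hg⟩ := G.subtype.exists_conj_mem_orthogonalGroup continuous_subtype_val
  exact ⟨g, fun A hA => hg ⟨A, hA⟩⟩
end

section
/- Let K ⊆ ℝⁿ, n ≥ 3, be an affine symmetric body of revolution with axis of revolution L and hyperplane of revolution H, and let Γ be a linear subspace of dimension k with 1 < k < n that is not contained in H. Then K ∩ Γ is an affine symmetric body of revolution in Γ with hyperplane of revolution Γ ∩ H; moreover if L ⊆ Γ then L is an axis of revolution of K ∩ Γ. -/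
/-- A symmetric convex body: compact, convex, nonempty interior, invariant under `x ↦ -x`. -/
def IsSymmConvexBody {E : Type*} [NormedAddCommGroup E] [InnerProductSpace ℝ E]
    (K : Set E) : Prop :=
  IsCompact K ∧ Convex ℝ K ∧ (interior K).Nonempty ∧ ∀ x ∈ K, -x ∈ K

/-- An ellipsoid: an affine image of the closed unit Euclidean ball. -/
def IsEllipsoid {E : Type*} [NormedAddCommGroup E] [InnerProductSpace ℝ E]
    (K : Set E) : Prop :=
  ∃ (T : E ≃L[ℝ] E) (c : E), K = (fun x => c + T x) '' Metric.closedBall (0 : E) 1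

/-- A (honest) symmetric body of revolution with axis spanned by the unit vector `v`:
every section by an affine hyperplane orthogonal to the axis is a closed ball
centered on the axis (possibly empty). -/
def IsBodyOfRevolutionWith {E : Type*} [NormedAddCommGroup E] [InnerProductSpace ℝ E]
    (K : Set E) (v : E) : Prop :=
  ‖v‖ = 1 ∧ ∀ t : ℝ,
    K ∩ {x | (inner ℝ v x : ℝ) = t} = ∅ ∨
    ∃ r : ℝ, 0 ≤ r ∧
      K ∩ {x | (inner ℝ v x : ℝ) = t} =
        Metric.closedBall (t • v) r ∩ {x | (inner ℝ v x : ℝ) = t}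

/-- An affine symmetric body of revolution with axis of revolution `L` and associated
hyperplane of revolution `H`: some linear (continuous linear equivalence) image of `K`
is an honest body of revolution whose axis is the image of `L` and whose hyperplane of
revolution (the orthogonal complement of the axis) is the image of `H`. -/
def IsAffineBodyOfRevolution {E : Type*} [NormedAddCommGroup E] [InnerProductSpace ℝ E]
    (K : Set E) (L H : Submodule ℝ E) : Prop :=
  ∃ (T : E ≃L[ℝ] E) (v : E),
    IsBodyOfRevolutionWith (T '' K) v ∧
    L.map ((T : E →L[ℝ] E) : E →ₗ[ℝ] E) = Submodule.span ℝ {v} ∧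
    H.map ((T : E →L[ℝ] E) : E →ₗ[ℝ] E) = (Submodule.span ℝ {v})ᗮ

/-!
After the linear change of variables `T`, the section of `K` by `Γ` becomes the section of an
honest body of revolution `B` with unit axis `v` by `G = T Γ`. Let `w` be the unit vector along
the orthogonal projection of `v` onto `G`. For `z ∈ G`, `⟪w, z⟫` is a positive multiple of
`⟪v, z⟫`, so each hyperplane section of `B ∩ G` orthogonal to `w` is the intersection of a
section of `B`, a ball centred at `t v`, with an affine subspace of `G`. That subspace is
orthogonal to the segment from `t v` to its foot on `ℝ w`, so by Pythagoras the intersection is a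
ball centred on `ℝ w`. Since `G` is isometric to `Γ`, this makes `K ∩ Γ` an affine body of
revolution, and its hyperplane `Γ ∩ H` corresponds to `G ∩ v^⊥ = G ∩ w^⊥`. If `L ≤ Γ`, then
`v ∈ G` and `w = v`.
-/

open Metric Set
open scoped InnerProductSpace

section Pythagoras

variable {X Y : Type*} [PseudoMetricSpace X] [PseudoMetricSpace Y] {f : X → Y} {S : Set X}
  {a : Y} {c : X} {d r : ℝ}

theorem preimage_closedBall_inter_eq_empty_of_dist_sq
    (h : ∀ z ∈ S, dist (f z) a ^ 2 = dist z c ^ 2 + d ^ 2) (hr : r < d) :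
    f ⁻¹' closedBall a r ∩ S = ∅ := by
  refine eq_empty_of_forall_notMem fun z ⟨hzr, hzS⟩ => ?_
  have hz : dist (f z) a ≤ r := hzr
  nlinarith [h z hzS, dist_nonneg (x := f z) (y := a), dist_nonneg (x := z) (y := c)]

theorem preimage_closedBall_inter_eq_of_dist_sq (hd : 0 ≤ d)
    (h : ∀ z ∈ S, dist (f z) a ^ 2 = dist z c ^ 2 + d ^ 2) (hr : d ≤ r) :
    f ⁻¹' closedBall a r ∩ S = closedBall c √(r ^ 2 - d ^ 2) ∩ S := by
  ext z
  refine and_congr_left fun hzS => ?_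
  simp only [mem_preimage, mem_closedBall]
  rw [Real.le_sqrt dist_nonneg (by nlinarith), ← sq_le_sq₀ dist_nonneg (hd.trans hr), h z hzS]
  constructor <;> intro <;> linarith

end Pythagoras

section BodyOfRevolution

variable {E F : Type*} [NormedAddCommGroup E] [InnerProductSpace ℝ E]
  [NormedAddCommGroup F] [InnerProductSpace ℝ F]

theorem IsBodyOfRevolutionWith.image_linearIsometryEquiv {S : Set E} {w : E}
    (h : IsBodyOfRevolutionWith S w) (f : E ≃ₗᵢ[ℝ] F) :
    IsBodyOfRevolutionWith (f '' S) (f w) := by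
  refine ⟨by simpa using h.1, fun t => ?_⟩
  have hplane : {x : F | ⟪f w, x⟫_ℝ = t} = f '' {y | ⟪w, y⟫_ℝ = t} := by
    ext x
    simp [f.image_eq_preimage_symm, LinearIsometryEquiv.inner_map_eq_flip]
  rw [hplane, ← image_inter f.injective]
  rcases h.2 t with h0 | ⟨r, hr, hball⟩
  · exact .inl (by rw [h0, image_empty])
  · exact .inr ⟨r, hr, by rw [hball, image_inter f.injective, f.image_closedBall, map_smul]⟩

variable (G : Submodule ℝ E) [G.HasOrthogonalProjection] {v : E}

noncomputable def Submodule.sectionAxis (v : E) : G :=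
  ‖G.orthogonalProjectionOnto v‖⁻¹ • G.orthogonalProjectionOnto v

theorem Submodule.inner_sectionAxis (z : G) :
    ⟪G.sectionAxis v, z⟫_ℝ = ‖G.orthogonalProjectionOnto v‖⁻¹ * ⟪v, (z : E)⟫_ℝ := by
  rw [sectionAxis, real_inner_smul_left, inner_orthogonalProjectionOnto_eq_of_mem_right]

variable {G}

theorem Submodule.norm_orthogonalProjectionOnto_ne_zero (hv : v ∉ Gᗮ) :
    ‖G.orthogonalProjectionOnto v‖ ≠ 0 := by
  rwa [Ne, norm_eq_zero, orthogonalProjectionOnto_eq_zero_iff]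

theorem Submodule.norm_sectionAxis (hv : v ∉ Gᗮ) : ‖G.sectionAxis v‖ = 1 := by
  rw [sectionAxis, norm_smul, norm_inv, norm_norm,
    inv_mul_cancel₀ (norm_orthogonalProjectionOnto_ne_zero hv)]

theorem Submodule.sectionAxis_of_mem (hv : ‖v‖ = 1) (hvG : v ∈ G) :
    G.sectionAxis v = ⟨v, hvG⟩ := by
  rw [sectionAxis, orthogonalProjectionOnto_mem_subspace_eq_self ⟨v, hvG⟩]
  ext
  simp [hv]

theorem Submodule.inner_sectionAxis_eq_zero_iff (hv : v ∉ Gᗮ) (z : G) :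
    ⟪G.sectionAxis v, z⟫_ℝ = 0 ↔ ⟪v, (z : E)⟫_ℝ = 0 := by
  rw [inner_sectionAxis, mul_eq_zero, inv_eq_zero,
    or_iff_right (norm_orthogonalProjectionOnto_ne_zero hv)]

theorem Submodule.comap_subtype_orthogonal_span_singleton (hv : v ∉ Gᗮ) :
    (ℝ ∙ v)ᗮ.comap G.subtype = (ℝ ∙ G.sectionAxis v)ᗮ := by
  ext z
  rw [mem_comap, subtype_apply, mem_orthogonal_singleton_iff_inner_right,
    mem_orthogonal_singleton_iff_inner_right, inner_sectionAxis_eq_zero_iff hv]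

theorem Submodule.dist_sq_eq_of_inner_sectionAxis_eq (hv : v ∉ Gᗮ) {z : G} {s : ℝ}
    (hz : ⟪G.sectionAxis v, z⟫_ℝ = s) :
    dist (z : E) ((‖G.orthogonalProjectionOnto v‖ * s) • v) ^ 2 =
      dist z (s • G.sectionAxis v) ^ 2 +
        dist ((s • G.sectionAxis v : G) : E) ((‖G.orthogonalProjectionOnto v‖ * s) • v) ^ 2 := by
  set w := G.sectionAxis v
  set u : G := z - s • w
  have hwu : ⟪w, u⟫_ℝ = 0 := by
    rw [inner_sub_right, real_inner_smul_right, real_inner_self_eq_norm_sq, norm_sectionAxis hv,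
      hz]
    ring
  have hvu : ⟪(u : E), v⟫_ℝ = 0 := by
    rw [real_inner_comm, ← inner_sectionAxis_eq_zero_iff hv, hwu]
  have horth : ⟪(u : E), ((s • w : G) : E) - (‖G.orthogonalProjectionOnto v‖ * s) • v⟫_ℝ = 0 := by
    rw [inner_sub_right, real_inner_smul_right, hvu, ← coe_inner, inner_smul_right,
      real_inner_comm, hwu]
    ring
  rw [dist_eq_norm, dist_eq_norm, dist_eq_norm, ← sub_add_sub_cancel _ ((s • w : G) : E),
    ← AddSubgroupClass.coe_sub, norm_add_sq_real, horth, coe_norm u]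
  ring

theorem IsBodyOfRevolutionWith.preimage_subtype_val {B : Set E}
    (hB : IsBodyOfRevolutionWith B v) (hv : v ∉ Gᗮ) :
    IsBodyOfRevolutionWith (((↑) : G → E) ⁻¹' B) (G.sectionAxis v) := by
  refine ⟨G.norm_sectionAxis hv, fun s => ?_⟩
  set q := ‖G.orthogonalProjectionOnto v‖
  have hq : q ≠ 0 := G.norm_orthogonalProjectionOnto_ne_zero hv
  have hplane : {z : G | ⟪G.sectionAxis v, z⟫_ℝ = s} = (↑) ⁻¹' {x : E | ⟪v, x⟫_ℝ = q * s} := by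
    ext z
    rw [mem_ofPred_eq, Submodule.inner_sectionAxis, inv_mul_eq_iff_eq_mul₀ hq]
    rfl
  rw [hplane, ← preimage_inter]
  rcases hB.2 (q * s) with h0 | ⟨r, -, hball⟩
  · exact .inl (by rw [h0, preimage_empty])
  rw [hball, preimage_inter, ← hplane]
  have hpyth := fun z (hz : z ∈ {z : G | ⟪G.sectionAxis v, z⟫_ℝ = s}) =>
    G.dist_sq_eq_of_inner_sectionAxis_eq hv hz
  rcases lt_or_ge r (dist ((s • G.sectionAxis v : G) : E) ((q * s) • v)) with hr | hr
  · exact .inl (preimage_closedBall_inter_eq_empty_of_dist_sq hpyth hr)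
  · exact .inr ⟨_, Real.sqrt_nonneg _, preimage_closedBall_inter_eq_of_dist_sq dist_nonneg hpyth hr⟩

end BodyOfRevolution

namespace LinearEquiv

variable {R M M₂ : Type*} [Semiring R] [AddCommMonoid M] [Module R M] [AddCommMonoid M₂]
  [Module R M₂] (e : M ≃ₗ[R] M₂) (p : Submodule R M)

theorem submoduleMap_image_preimage_val (s : Set M) :
    e.submoduleMap p '' ((↑) ⁻¹' s) = (↑) ⁻¹' (e '' s) := by
  ext ⟨y, hy⟩
  obtain ⟨x, hx, rfl⟩ := Submodule.mem_map.1 hy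
  simp [← Subtype.coe_inj, hx]

theorem map_submoduleMap_comap_subtype (q : Submodule R M) :
    (q.comap p.subtype).map (e.submoduleMap p : p →ₗ[R] p.map (e : M →ₗ[R] M₂)) =
      (q.map (e : M →ₗ[R] M₂)).comap (p.map (e : M →ₗ[R] M₂)).subtype := by
  ext ⟨y, hy⟩
  obtain ⟨x, hx, rfl⟩ := Submodule.mem_map.1 hy
  simp

end LinearEquiv

theorem LinearIsometryEquiv.nonempty_of_finrank_eq {𝕜 E F : Type*} [RCLike 𝕜]
    [NormedAddCommGroup E] [InnerProductSpace 𝕜 E] [FiniteDimensional 𝕜 E]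
    [NormedAddCommGroup F] [InnerProductSpace 𝕜 F] [FiniteDimensional 𝕜 F]
    (h : Module.finrank 𝕜 E = Module.finrank 𝕜 F) : Nonempty (E ≃ₗᵢ[𝕜] F) :=
  ⟨((stdOrthonormalBasis 𝕜 E).reindex (finCongr h)).repr.trans
    (stdOrthonormalBasis 𝕜 F).repr.symm⟩

theorem IsAffineBodyOfRevolution.of_linearEquiv {E F : Type*} [NormedAddCommGroup E]
    [InnerProductSpace ℝ E] [FiniteDimensional ℝ E] [NormedAddCommGroup F] [InnerProductSpace ℝ F]
    {S : Set E} {L H : Submodule ℝ E} (e : E ≃ₗ[ℝ] F) {w : F}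
    (hS : IsBodyOfRevolutionWith (e '' S) w) (hL : L.map (e : E →ₗ[ℝ] F) = ℝ ∙ w)
    (hH : H.map (e : E →ₗ[ℝ] F) = (ℝ ∙ w)ᗮ) : IsAffineBodyOfRevolution S L H := by
  have := e.finiteDimensional
  obtain ⟨ι⟩ := LinearIsometryEquiv.nonempty_of_finrank_eq (𝕜 := ℝ) e.finrank_eq.symm
  refine ⟨(e.trans ι.toLinearEquiv).toContinuousLinearEquiv, ι w, ?_, ?_, ?_⟩
  · change IsBodyOfRevolutionWith ((ι ∘ e) '' S) (ι w)
    rw [image_comp]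
    exact hS.image_linearIsometryEquiv ι
  · change L.map ((e.trans ι.toLinearEquiv : E ≃ₗ[ℝ] E) : E →ₗ[ℝ] E) = _
    rw [LinearEquiv.coe_trans, Submodule.map_comp, hL, Submodule.map_span, image_singleton]
    rfl
  · change H.map ((e.trans ι.toLinearEquiv : E ≃ₗ[ℝ] E) : E →ₗ[ℝ] E) = _
    rw [LinearEquiv.coe_trans, Submodule.map_comp, hH, Submodule.map_orthogonal_equiv,
      Submodule.map_span, image_singleton]
    rfl

theorem section_of_affine_body_of_revolution_general
    {n : ℕ}
    (K : Set (EuclideanSpace ℝ (Fin n)))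
    (L H : Submodule ℝ (EuclideanSpace ℝ (Fin n)))
    (hrev : IsAffineBodyOfRevolution K L H)
    (Γ : Submodule ℝ (EuclideanSpace ℝ (Fin n)))
    (hΓH : ¬ Γ ≤ H) :
    (∃ L' : Submodule ℝ Γ,
        IsAffineBodyOfRevolution (((↑) : Γ → EuclideanSpace ℝ (Fin n)) ⁻¹' K) L'
          (H.comap Γ.subtype)) ∧
    (L ≤ Γ →
        IsAffineBodyOfRevolution (((↑) : Γ → EuclideanSpace ℝ (Fin n)) ⁻¹' K)
          (L.comap Γ.subtype) (H.comap Γ.subtype)) := by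
  obtain ⟨T, v, hB, hL, hH⟩ := hrev
  replace hL : L.map T.toLinearEquiv.toLinearMap = ℝ ∙ v := hL
  replace hH : H.map T.toLinearEquiv.toLinearMap = (ℝ ∙ v)ᗮ := hH
  set G := Γ.map T.toLinearEquiv.toLinearMap
  have hv : v ∉ Gᗮ := by
    intro hv
    have hGH : G ≤ (ℝ ∙ v)ᗮ := G.le_orthogonal_orthogonal.trans
      (Submodule.orthogonal_le ((Submodule.span_singleton_le_iff_mem _ _).2 hv))
    rw [← hH] at hGH
    exact hΓH ((Submodule.map_le_map_iff_of_injective T.injective _ _).1 hGH)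
  set e := T.toLinearEquiv.submoduleMap Γ
  have hS : IsBodyOfRevolutionWith (e '' ((↑) ⁻¹' K)) (G.sectionAxis v) := by
    rw [T.toLinearEquiv.submoduleMap_image_preimage_val Γ K]
    exact hB.preimage_subtype_val hv
  have hH' : (H.comap Γ.subtype).map (e : Γ →ₗ[ℝ] G) = (ℝ ∙ G.sectionAxis v)ᗮ := by
    rw [T.toLinearEquiv.map_submoduleMap_comap_subtype, hH,
      Submodule.comap_subtype_orthogonal_span_singleton hv]
  refine ⟨⟨_, .of_linearEquiv e hS (Submodule.map_comap_eq_of_surjective e.surjective _) hH'⟩,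
    fun hLΓ => .of_linearEquiv e hS ?_ hH'⟩
  have hvG : v ∈ G := Submodule.map_mono hLΓ (hL ▸ Submodule.mem_span_singleton_self v)
  rw [T.toLinearEquiv.map_submoduleMap_comap_subtype, hL, Submodule.sectionAxis_of_mem hB.1 hvG,
    ← Submodule.submoduleOf, LinearMap.submoduleOf_span_singleton_of_mem]

/-- If K ⊆ ℝⁿ, n ≥ 3, is an affine symmetric body of revolution with axis L and
hyperplane of revolution H, and Γ is a k-dimensional linear subspace, 1 < k < n,
not contained in H, then K ∩ Γ is an affine symmetric body of revolution in Γ with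
hyperplane of revolution Γ ∩ H; moreover if L ⊆ Γ then L is an axis of K ∩ Γ. -/
theorem section_of_affine_body_of_revolution
    {n k : ℕ} (hn : 3 ≤ n) (hk1 : 1 < k) (hkn : k < n)
    (K : Set (EuclideanSpace ℝ (Fin n))) (hK : IsSymmConvexBody K)
    (L H : Submodule ℝ (EuclideanSpace ℝ (Fin n)))
    (hrev : IsAffineBodyOfRevolution K L H)
    (Γ : Submodule ℝ (EuclideanSpace ℝ (Fin n)))
    (hΓdim : Module.finrank ℝ Γ = k) (hΓH : ¬ Γ ≤ H) :
    (∃ L' : Submodule ℝ Γ,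
        IsAffineBodyOfRevolution (((↑) : Γ → EuclideanSpace ℝ (Fin n)) ⁻¹' K) L'
          (H.comap Γ.subtype)) ∧
    (L ≤ Γ →
        IsAffineBodyOfRevolution (((↑) : Γ → EuclideanSpace ℝ (Fin n)) ⁻¹' K)
          (L.comap Γ.subtype) (H.comap Γ.subtype)) :=
  section_of_affine_body_of_revolution_general K L H hrev Γ hΓH
end

section
/- Let K ⊆ ℝⁿ, n ≥ 3, be an affine symmetric body of revolution with axis of revolution L. If there exists a linear subspace Γ ⊆ ℝⁿ of dimension ≥ 2 containing L such that K ∩ Γ is an ellipsoid, then K itself is an ellipsoid. -/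
/-!
After a linear change of variables `K` is a body of revolution about a unit vector `v`, and the
image of `Γ` contains a unit vector `w ⊥ v`. A body of revolution is determined by its meridian
section in the plane spanned by `v` and `w`, and here that section is a centred ellipse
`‖t • u₁ + s • u₂‖ ≤ 1`. Rotational symmetry makes it invariant under `s ↦ -s`, which forces
`u₁ ⊥ u₂`; hence `K` is the ellipsoid `‖u₁‖² ⟪v, x⟫² + ‖u₂‖² ‖x - ⟪v, x⟫ • v‖² ≤ 1`.
-/

open Metric Function
open scoped RealInnerProductSpace

section NormedSpace

variable {F : Type*} [NormedAddCommGroup F] [NormedSpace ℝ F]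

theorem eq_of_closedBall_subset_closedBall {x y : F} {r : ℝ} (hr : 0 < r)
    (h : closedBall x r ⊆ closedBall y r) : x = y := by
  by_contra hxy
  have hd : 0 < ‖x - y‖ := norm_pos_iff.2 (sub_ne_zero.2 hxy)
  -- the point of `closedBall x r` farthest from `y`
  set p := x + (r / ‖x - y‖) • (x - y)
  have hp : p ∈ closedBall x r := by
    rw [mem_closedBall, dist_eq_norm, add_sub_cancel_left, norm_smul,
      Real.norm_of_nonneg (by positivity), div_mul_cancel₀ _ hd.ne']
  have hpy : p - y = (1 + r / ‖x - y‖) • (x - y) := by module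
  have hfar := h hp
  rw [mem_closedBall, dist_eq_norm, hpy, norm_smul, Real.norm_of_nonneg (by positivity),
    add_mul, one_mul, div_mul_cancel₀ _ hd.ne'] at hfar
  linarith

theorem norm_le_norm_of_forall_norm_smul_le_one {x y : F}
    (h : ∀ c : ℝ, ‖c • x‖ ≤ 1 → ‖c • y‖ ≤ 1) : ‖y‖ ≤ ‖x‖ := by
  by_contra! hxy
  have hpos : 0 < ‖x‖ + ‖y‖ := by linarith [norm_nonneg x]
  have hy := h (2 / (‖x‖ + ‖y‖)) (by
    rw [norm_smul, Real.norm_of_nonneg (by positivity), div_mul_eq_mul_div, div_le_one hpos]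
    linarith)
  rw [norm_smul, Real.norm_of_nonneg (by positivity), div_mul_eq_mul_div, div_le_one hpos] at hy
  linarith

end NormedSpace

section InnerProductSpace

variable {E : Type*} [NormedAddCommGroup E] [InnerProductSpace ℝ E]

theorem norm_smul_add_smul_sq_of_inner_eq_zero {u₁ u₂ : E} (h : ⟪u₁, u₂⟫ = 0) (t s : ℝ) :
    ‖t • u₁ + s • u₂‖ ^ 2 = (t * ‖u₁‖) ^ 2 + (s * ‖u₂‖) ^ 2 := by
  rw [norm_add_sq_real, real_inner_smul_left, real_inner_smul_right, h, norm_smul, norm_smul,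
    Real.norm_eq_abs, Real.norm_eq_abs, mul_pow, mul_pow, sq_abs, sq_abs]
  ring

theorem inner_eq_zero_of_forall_norm_le_one_neg {u₁ u₂ : E}
    (h : ∀ t s : ℝ, ‖t • u₁ + s • u₂‖ ≤ 1 → ‖t • u₁ + (-s) • u₂‖ ≤ 1) : ⟪u₁, u₂⟫ = 0 := by
  have hle : ‖u₁ - u₂‖ ≤ ‖u₁ + u₂‖ := norm_le_norm_of_forall_norm_smul_le_one fun c hc => by
    simpa [smul_add, smul_sub, sub_eq_add_neg] using h c c (by simpa [smul_add] using hc)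
  have hge : ‖u₁ + u₂‖ ≤ ‖u₁ - u₂‖ := norm_le_norm_of_forall_norm_smul_le_one fun c hc => by
    simpa [smul_add, smul_sub, sub_eq_add_neg] using
      h c (-c) (by simpa [smul_sub, sub_eq_add_neg] using hc)
  have hsq := congrArg (· ^ 2) (le_antisymm hle hge)
  simp only [norm_add_sq_real, norm_sub_sq_real] at hsq
  linarith

theorem inner_smul_add_smul_eq {v w : E} (hv : ‖v‖ = 1) (hvw : ⟪v, w⟫ = 0) (t s : ℝ) :
    ⟪v, t • v + s • w⟫ = t := by
  rw [inner_add_right, real_inner_smul_right, real_inner_smul_right, real_inner_self_eq_norm_sq,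
    hv, hvw]
  ring

theorem inner_sub_inner_smul_eq_zero {v : E} (hv : ‖v‖ = 1) (x : E) :
    ⟪v, x - ⟪v, x⟫ • v⟫ = 0 := by
  rw [inner_sub_right, real_inner_smul_right, real_inner_self_eq_norm_sq, hv]
  ring

theorem Submodule.exists_norm_eq_one_inner_eq_zero (W : Submodule ℝ E) [FiniteDimensional ℝ W]
    (hW : 2 ≤ Module.finrank ℝ W) (v : E) : ∃ w ∈ W, ‖w‖ = 1 ∧ ⟪v, w⟫ = 0 := by
  set f : W →ₗ[ℝ] ℝ := (innerₛₗ ℝ v).domRestrict W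
  have hrange : Module.finrank ℝ (LinearMap.range f) ≤ 1 :=
    (Submodule.finrank_le _).trans (Module.finrank_self ℝ).le
  have hker : LinearMap.ker f ≠ ⊥ := by
    intro h
    have := LinearMap.finrank_range_add_finrank_ker f
    rw [h, finrank_bot] at this
    omega
  obtain ⟨w, hw, hw0⟩ := Submodule.exists_mem_ne_zero_of_ne_bot hker
  have hw0' : (w : E) ≠ 0 := by simpa using hw0
  refine ⟨‖(w : E)‖⁻¹ • (w : E), W.smul_mem _ w.2, norm_smul_inv_norm hw0', ?_⟩
  rw [real_inner_smul_right, show ⟪v, (w : E)⟫ = 0 from hw, mul_zero]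

end InnerProductSpace

section Ellipsoid

variable {E : Type*} [NormedAddCommGroup E] [InnerProductSpace ℝ E]

theorem isEllipsoid_preimage_closedBall [FiniteDimensional ℝ E] {f : E →ₗ[ℝ] E}
    (hf : Injective f) : IsEllipsoid (f ⁻¹' closedBall 0 1) := by
  set e := (LinearEquiv.ofInjectiveEndo f hf).toContinuousLinearEquiv
  refine ⟨e.symm, 0, ?_⟩
  simp only [zero_add]
  exact (e.image_symm_eq_preimage _).symm

theorem IsEllipsoid.exists_eq_preimage_closedBall {K : Set E} (hK : IsEllipsoid K)
    (hsymm : ∀ x ∈ K, -x ∈ K) : ∃ T : E ≃L[ℝ] E, K = T ⁻¹' closedBall 0 1 := by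
  obtain ⟨T, c, rfl⟩ := hK
  set z := T.symm c
  -- in the coordinates `x = c + T y`, the symmetry `x ↦ -x` reads `y ↦ -(y + 2 • z)`
  have hball : closedBall (-((2 : ℝ) • z)) 1 ⊆ closedBall 0 1 := by
    intro y hy
    have hy : ‖y + (2 : ℝ) • z‖ ≤ 1 := by simpa [dist_eq_norm] using hy
    obtain ⟨y', hy', hyy'⟩ :=
      hsymm _ ⟨-(y + (2 : ℝ) • z), by rwa [mem_closedBall_zero_iff, norm_neg], rfl⟩
    convert hy'
    apply T.injective
    rw [← T.apply_symm_apply c] at hyy'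
    simp only [map_neg, map_add, map_smul] at hyy' ⊢
    linear_combination (norm := module) -hyy'
  have hc : c = 0 := by
    have hz : (2 : ℝ) • z = 0 := neg_eq_zero.1 (eq_of_closedBall_subset_closedBall one_pos hball)
    simpa [z] using hz
  refine ⟨T.symm, ?_⟩
  simp [hc, T.image_eq_preimage_symm]

theorem IsEllipsoid.preimage {K : Set E} (hK : IsEllipsoid K) (T : E ≃L[ℝ] E) :
    IsEllipsoid (T ⁻¹' K) := by
  obtain ⟨S, c, rfl⟩ := hK
  refine ⟨S.trans T.symm, T.symm c, ?_⟩
  rw [← T.image_symm_eq_preimage, Set.image_image]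
  simp only [map_add, ContinuousLinearEquiv.trans_apply]

end Ellipsoid

section Revolution

variable {E : Type*} [NormedAddCommGroup E] [InnerProductSpace ℝ E]

namespace IsBodyOfRevolutionWith

variable {K : Set E} {v : E}

theorem mem_iff_of_inner_eq_of_norm_eq (hK : IsBodyOfRevolutionWith K v) {x y : E}
    (hxy : ⟪v, x⟫ = ⟪v, y⟫) (hr : ‖x - ⟪v, x⟫ • v‖ = ‖y - ⟪v, y⟫ • v‖) : x ∈ K ↔ y ∈ K := by
  rcases hK.2 ⟪v, x⟫ with hempty | ⟨r, -, hball⟩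
  · have hnot : ∀ z, ⟪v, z⟫ = ⟪v, x⟫ → z ∉ K := fun z hz hzK =>
      (Set.eq_empty_iff_forall_notMem.1 hempty) z ⟨hzK, hz⟩
    exact iff_of_false (hnot x rfl) (hnot y hxy.symm)
  · have hmem : ∀ z, ⟪v, z⟫ = ⟪v, x⟫ → (z ∈ K ↔ ‖z - ⟪v, z⟫ • v‖ ≤ r) := fun z hz => by
      simpa [hz, dist_eq_norm] using Set.ext_iff.1 hball z
    rw [hmem x rfl, hmem y hxy.symm, hr]

theorem mem_iff_smul_add_norm_smul_mem (hK : IsBodyOfRevolutionWith K v) {w : E}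
    (hw : ‖w‖ = 1) (hvw : ⟪v, w⟫ = 0) (x : E) :
    x ∈ K ↔ ⟪v, x⟫ • v + ‖x - ⟪v, x⟫ • v‖ • w ∈ K :=
  hK.mem_iff_of_inner_eq_of_norm_eq (inner_smul_add_smul_eq hK.1 hvw _ _).symm <| by
    rw [inner_smul_add_smul_eq hK.1 hvw, add_sub_cancel_left, norm_smul, hw, mul_one,
      norm_norm]

theorem smul_add_neg_smul_mem_iff (hK : IsBodyOfRevolutionWith K v) {w : E}
    (hvw : ⟪v, w⟫ = 0) (t s : ℝ) : t • v + (-s) • w ∈ K ↔ t • v + s • w ∈ K :=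
  hK.mem_iff_of_inner_eq_of_norm_eq
    (by rw [inner_smul_add_smul_eq hK.1 hvw, inner_smul_add_smul_eq hK.1 hvw]) <| by
    rw [inner_smul_add_smul_eq hK.1 hvw, inner_smul_add_smul_eq hK.1 hvw, add_sub_cancel_left,
      add_sub_cancel_left, neg_smul, norm_neg]

end IsBodyOfRevolutionWith

noncomputable def axialScaling (v : E) (a b : ℝ) : E →ₗ[ℝ] E :=
  a • (innerₛₗ ℝ v).smulRight v + b • (LinearMap.id - (innerₛₗ ℝ v).smulRight v)

theorem axialScaling_apply (v : E) (a b : ℝ) (x : E) :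
    axialScaling v a b x = (a * ⟪v, x⟫) • v + b • (x - ⟪v, x⟫ • v) := by
  simp [axialScaling, mul_smul]

theorem norm_axialScaling_sq {v : E} (hv : ‖v‖ = 1) (a b : ℝ) (x : E) :
    ‖axialScaling v a b x‖ ^ 2 = (a * ⟪v, x⟫) ^ 2 + (b * ‖x - ⟪v, x⟫ • v‖) ^ 2 := by
  rw [axialScaling_apply,
    norm_smul_add_smul_sq_of_inner_eq_zero (inner_sub_inner_smul_eq_zero hv x), hv, mul_one]

theorem axialScaling_injective {v : E} (hv : ‖v‖ = 1) {a b : ℝ} (ha : a ≠ 0) (hb : b ≠ 0) :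
    Injective (axialScaling v a b) := by
  refine (injective_iff_map_eq_zero _).2 fun x hx => ?_
  have hsq := norm_axialScaling_sq hv a b x
  rw [hx, norm_zero, zero_pow two_ne_zero] at hsq
  obtain ⟨hax, hbr⟩ := (add_eq_zero_iff_of_nonneg (sq_nonneg _) (sq_nonneg _)).1 hsq.symm
  have hinner : ⟪v, x⟫ = 0 :=
    (mul_eq_zero.1 (pow_eq_zero_iff two_ne_zero |>.1 hax)).resolve_left ha
  have hrad : ‖x - ⟪v, x⟫ • v‖ = 0 :=
    (mul_eq_zero.1 (pow_eq_zero_iff two_ne_zero |>.1 hbr)).resolve_left hb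
  simpa [hinner] using hrad

theorem IsBodyOfRevolutionWith.eq_preimage_axialScaling {F : Type*} [NormedAddCommGroup F]
    [InnerProductSpace ℝ F] {K : Set E} {v w : E}
    (hK : IsBodyOfRevolutionWith K v) (hw : ‖w‖ = 1) (hvw : ⟪v, w⟫ = 0) {u₁ u₂ : F}
    (hplane : ∀ t s : ℝ, t • v + s • w ∈ K ↔ ‖t • u₁ + s • u₂‖ ≤ 1) :
    K = axialScaling v ‖u₁‖ ‖u₂‖ ⁻¹' closedBall 0 1 := by
  have horth : ⟪u₁, u₂⟫ = 0 := inner_eq_zero_of_forall_norm_le_one_neg fun t s h =>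
    (hplane t (-s)).1 ((hK.smul_add_neg_smul_mem_iff hvw t s).2 ((hplane t s).2 h))
  ext x
  rw [hK.mem_iff_smul_add_norm_smul_mem hw hvw, hplane, Set.mem_preimage, mem_closedBall_zero_iff,
    ← sq_le_one_iff₀ (norm_nonneg _), ← sq_le_one_iff₀ (norm_nonneg _),
    norm_smul_add_smul_sq_of_inner_eq_zero horth, norm_axialScaling_sq hK.1, mul_comm ‖u₁‖,
    mul_comm ‖u₂‖]

end Revolution

theorem ellipsoidal_section_through_axis_general
    {n : ℕ}
    (K : Set (EuclideanSpace ℝ (Fin n))) (hK : IsSymmConvexBody K)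
    (L : Submodule ℝ (EuclideanSpace ℝ (Fin n)))
    (hrev : ∃ H, IsAffineBodyOfRevolution K L H)
    (Γ : Submodule ℝ (EuclideanSpace ℝ (Fin n)))
    (hΓdim : 2 ≤ Module.finrank ℝ Γ) (hLΓ : L ≤ Γ)
    (hell : IsEllipsoid (((↑) : Γ → EuclideanSpace ℝ (Fin n)) ⁻¹' K)) :
    IsEllipsoid K := by
  obtain ⟨-, T, v, hTK, hL, -⟩ := hrev
  set W := Γ.map (T : EuclideanSpace ℝ (Fin n) →ₗ[ℝ] EuclideanSpace ℝ (Fin n))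
  have hWΓ : ∀ y ∈ W, T.symm y ∈ Γ := fun y hy =>
    (Submodule.mem_map_equiv (p := Γ) (e := T.toLinearEquiv)).1 hy
  have hvW : v ∈ W := Submodule.map_mono hLΓ (hL ▸ Submodule.mem_span_singleton_self v)
  obtain ⟨w, hwW, hw, hvw⟩ := W.exists_norm_eq_one_inner_eq_zero
    (by rwa [LinearEquiv.finrank_map_eq T.toLinearEquiv]) v
  obtain ⟨S, hS⟩ := hell.exists_eq_preimage_closedBall fun x hx => hK.2.2.2 x hx
  set u₁ := S ⟨T.symm v, hWΓ v hvW⟩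
  set u₂ := S ⟨T.symm w, hWΓ w hwW⟩
  have hplane : ∀ t s : ℝ, t • v + s • w ∈ T '' K ↔ ‖t • u₁ + s • u₂‖ ≤ 1 := fun t s => by
    have hmem := Set.ext_iff.1 hS (t • ⟨T.symm v, hWΓ v hvW⟩ + s • ⟨T.symm w, hWΓ w hwW⟩)
    rw [Set.mem_preimage, Set.mem_preimage, map_add, map_smul, map_smul,
      mem_closedBall_zero_iff] at hmem
    rw [T.image_eq_preimage_symm, Set.mem_preimage, map_add, map_smul, map_smul]
    exact hmem
  have hu₁ : ‖u₁‖ ≠ 0 := by simpa [u₁] using ne_zero_of_norm_ne_zero (hTK.1.symm ▸ one_ne_zero)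
  have hu₂ : ‖u₂‖ ≠ 0 := by simpa [u₂] using ne_zero_of_norm_ne_zero (hw.symm ▸ one_ne_zero)
  have hTK_ell : IsEllipsoid (T '' K) := by
    rw [hTK.eq_preimage_axialScaling hw hvw hplane]
    exact isEllipsoid_preimage_closedBall (axialScaling_injective hTK.1 hu₁ hu₂)
  simpa only [Set.preimage_image_eq K T.injective] using hTK_ell.preimage T

/-- If K ⊆ ℝⁿ, n ≥ 3, is an affine symmetric body of revolution with axis L, and some
linear subspace Γ of dimension ≥ 2 containing L meets K in an ellipsoid, then K is an
ellipsoid. -/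
theorem ellipsoidal_section_through_axis
    {n : ℕ} (hn : 3 ≤ n)
    (K : Set (EuclideanSpace ℝ (Fin n))) (hK : IsSymmConvexBody K)
    (L : Submodule ℝ (EuclideanSpace ℝ (Fin n)))
    (hrev : ∃ H, IsAffineBodyOfRevolution K L H)
    (Γ : Submodule ℝ (EuclideanSpace ℝ (Fin n)))
    (hΓdim : 2 ≤ Module.finrank ℝ Γ) (hLΓ : L ≤ Γ)
    (hell : IsEllipsoid (((↑) : Γ → EuclideanSpace ℝ (Fin n)) ⁻¹' K)) :
    IsEllipsoid K :=
  ellipsoidal_section_through_axis_general K hK L hrev Γ hΓdim hLΓ hell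
end

section
/- Let B ⊆ ℝ^{n+1} be a symmetric convex body. If x_i → x in Sⁿ, then the hyperplane sections x_i^⊥ ∩ B converge to x^⊥ ∩ B in the Hausdorff metric. -/
/-
Since `B` is symmetric and convex with nonempty interior, it contains a ball `closedBall 0 r`,
and being compact it lies in some `closedBall 0 R`. For `y ∈ B` with `⟪u, y⟫ = 0`, the value
`t = ⟪v, y⟫` is at most `‖u - v‖ R` in absolute value. Shrinking `y` by the factor `1 - ε`,
with `ε = ‖u - v‖ R / r`, towards a point `p` of `closedBall 0 r` on the line `ℝ v` cancels `t`,
stays in `B` by convexity, and moves `y` by at most `ε (R + r)`. Hence the Hausdorff distance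
between the sections by `u^⊥` and `v^⊥` is `O(‖u - v‖)`.
-/

open Metric Filter Topology
open scoped RealInnerProductSpace

section

variable {E : Type*} [NormedAddCommGroup E] [InnerProductSpace ℝ E]

lemma IsSymmConvexBody.zero_mem_interior {K : Set E} (hK : IsSymmConvexBody K) :
    (0 : E) ∈ interior K := by
  obtain ⟨-, hconv, ⟨w, hw⟩, hsymm⟩ := hK
  simpa using hconv.combo_interior_self_mem_interior hw (hsymm w (interior_subset hw))
    (by norm_num : (0 : ℝ) < 1 / 2) (by norm_num : (0 : ℝ) ≤ 1 / 2) (by norm_num)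

lemma IsSymmConvexBody.exists_closedBall_subset {K : Set E} (hK : IsSymmConvexBody K) :
    ∃ r > 0, closedBall (0 : E) r ⊆ K :=
  nhds_basis_closedBall.mem_iff.mp (mem_interior_iff_mem_nhds.mp hK.zero_mem_interior)

lemma abs_inner_le_of_inner_eq_zero {u v y : E} (huy : ⟪u, y⟫ = 0) :
    |⟪v, y⟫| ≤ ‖u - v‖ * ‖y‖ := by
  have : ⟪v, y⟫ = -⟪u - v, y⟫ := by rw [inner_sub_left, huy]; ring
  rw [this, abs_neg]
  exact abs_real_inner_le_norm _ _

lemma Convex.exists_mem_inner_eq_zero_dist_le {B : Set E} (hB : Convex ℝ B) {r R ε : ℝ}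
    (hball : closedBall (0 : E) r ⊆ B) (hε : 0 < ε) (hε1 : ε ≤ 1) {v y : E} (hv : ‖v‖ = 1)
    (hy : y ∈ B) (hyR : ‖y‖ ≤ R) (hvy : |⟪v, y⟫| ≤ ε * r) :
    ∃ z ∈ B ∩ {z | ⟪v, z⟫ = 0}, dist y z ≤ ε * (R + r) := by
  set p : E := -((1 - ε) / ε * ⟪v, y⟫) • v with hp
  have hp_norm : ‖p‖ ≤ r :=
    calc ‖p‖ = (1 - ε) / ε * |⟪v, y⟫| := by
          rw [hp, norm_smul, hv, mul_one, Real.norm_eq_abs, abs_neg, abs_mul,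
            abs_of_nonneg (by have := sub_nonneg.2 hε1; positivity)]
      _ ≤ 1 / ε * (ε * r) := by gcongr; linarith
      _ = r := by field_simp
  have hpB : p ∈ B := hball (mem_closedBall_zero_iff.2 hp_norm)
  refine ⟨(1 - ε) • y + ε • p, ⟨hB hy hpB (by linarith) hε.le (by ring), ?_⟩, ?_⟩
  · change ⟪v, (1 - ε) • y + ε • p⟫ = 0
    rw [inner_add_right, inner_smul_right, inner_smul_right, hp, inner_smul_right,
      real_inner_self_eq_norm_sq, hv]
    field_simp
    ring
  · have hyz : y - ((1 - ε) • y + ε • p) = ε • (y - p) := by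
      rw [smul_sub, sub_smul, one_smul]; abel
    calc dist y ((1 - ε) • y + ε • p) = ε * ‖y - p‖ := by
          rw [dist_eq_norm, hyz, norm_smul, Real.norm_of_nonneg hε.le]
      _ ≤ ε * (R + r) := by gcongr; exact (norm_sub_le _ _).trans (add_le_add hyR hp_norm)

lemma Convex.hausdorffDist_inter_orthogonal_le {B : Set E} (hB : Convex ℝ B) {r R : ℝ}
    (hr : 0 < r) (hball : closedBall (0 : E) r ⊆ B) (hR : B ⊆ closedBall 0 R) {u v : E}
    (hu : ‖u‖ = 1) (hv : ‖v‖ = 1) (huv : ‖u - v‖ * R ≤ r) :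
    hausdorffDist (B ∩ {y | ⟪u, y⟫ = 0}) (B ∩ {y | ⟪v, y⟫ = 0}) ≤ R * (R + r) / r * ‖u - v‖ := by
  have hR0 : 0 < R := by
    have hrv : r • v ∈ closedBall (0 : E) r := by simp [norm_smul, hv, abs_of_pos hr]
    have hrR : ‖r • v‖ ≤ R := mem_closedBall_zero_iff.1 (hR (hball hrv))
    rw [norm_smul, hv, mul_one, Real.norm_of_nonneg hr.le] at hrR
    exact hr.trans_le hrR
  rcases eq_or_ne u v with rfl | hne
  · rw [hausdorffDist_self_zero, sub_self, norm_zero, mul_zero]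
  set ε := ‖u - v‖ * R / r
  have hε : 0 < ε := by have := norm_pos_iff.2 (sub_ne_zero.2 hne); positivity
  have hε1 : ε ≤ 1 := (div_le_one hr).2 huv
  have hεr : ‖u - v‖ * R = ε * r := (div_mul_cancel₀ _ hr.ne').symm
  have hεC : ε * (R + r) = R * (R + r) / r * ‖u - v‖ := by simp only [ε]; ring
  have hyR {y : E} (hy : y ∈ B) : ‖y‖ ≤ R := mem_closedBall_zero_iff.1 (hR hy)
  rw [← hεC]
  have hsection {a b y : E} (hab : ‖a - b‖ = ‖u - v‖) (hy : y ∈ B) (hay : ⟪a, y⟫ = 0) :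
      |⟪b, y⟫| ≤ ε * r :=
    calc |⟪b, y⟫| ≤ ‖a - b‖ * ‖y‖ := abs_inner_le_of_inner_eq_zero hay
      _ ≤ ‖u - v‖ * R := by rw [hab]; gcongr; exact hyR hy
      _ = ε * r := hεr
  refine hausdorffDist_le_of_mem_dist (by positivity) ?_ ?_
  · rintro y ⟨hy, huy⟩
    exact hB.exists_mem_inner_eq_zero_dist_le hball hε hε1 hv hy (hyR hy) (hsection rfl hy huy)
  · rintro y ⟨hy, hvy⟩
    exact hB.exists_mem_inner_eq_zero_dist_le hball hε hε1 hu hy (hyR hy)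
      (hsection (norm_sub_rev v u) hy hvy)

end

/-- Hyperplane sections of a symmetric convex body depend continuously (in the Hausdorff
metric) on the unit normal vector: if x_i → x in Sⁿ then x_i^⊥ ∩ B → x^⊥ ∩ B. -/
theorem hyperplane_sections_hausdorff_continuous
    {n : ℕ}
    (B : Set (EuclideanSpace ℝ (Fin (n + 1)))) (hB : IsSymmConvexBody B)
    (x : ℕ → EuclideanSpace ℝ (Fin (n + 1))) (hx : ∀ i, ‖x i‖ = 1)
    (xlim : EuclideanSpace ℝ (Fin (n + 1))) (hxlim : ‖xlim‖ = 1)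
    (hconv : Filter.Tendsto x Filter.atTop (nhds xlim)) :
    Filter.Tendsto
      (fun i => Metric.hausdorffDist
        (B ∩ {y | (inner ℝ (x i) y : ℝ) = 0})
        (B ∩ {y | (inner ℝ xlim y : ℝ) = 0}))
      Filter.atTop (nhds 0) := by
  obtain ⟨r, hr, hball⟩ := hB.exists_closedBall_subset
  obtain ⟨R, hR⟩ := hB.1.isBounded.subset_closedBall 0
  have hdist : Tendsto (fun i => ‖x i - xlim‖) atTop (𝓝 0) :=
    tendsto_iff_norm_sub_tendsto_zero.mp hconv
  have hsmall : ∀ᶠ i in atTop, ‖x i - xlim‖ * R ≤ r := by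
    have := hdist.mul_const R
    rw [zero_mul] at this
    exact this.eventually (eventually_le_nhds hr)
  refine squeeze_zero' (Eventually.of_forall fun i => hausdorffDist_nonneg)
    (hsmall.mono fun i hi =>
      hB.2.1.hausdorffDist_inter_orthogonal_le hr hball hR (hx i) hxlim hi) ?_
  simpa using hdist.const_mul (R * (R + r) / r)
end
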